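/- If γ* is an optimal coupling for the 2-Wasserstein distance between ν = Σᵢ aᵢ δ_{xᵢ} and μ = Σⱼ bⱼ δ_{yⱼ} on ℝ^d (aᵢ > 0), and T* is the barycentric projection map induced by γ*, then W₂²(ν, μ) = W₂²(ν, T*_#ν) + Σᵢⱼ γ*ᵢⱼ‖T*(xᵢ) − yⱼ‖². -/

import Mathlib

/-!
Since `T*(xᵢ)` is the `γ*ᵢ·`-barycenter of the `yⱼ`, expanding each square around it (the
cross terms cancel) splits the cost of `γ*` as `∑ᵢ aᵢ‖xᵢ - T*(xᵢ)‖² + ∑ᵢⱼ γ*ᵢⱼ‖T*(xᵢ) - yⱼ‖²`.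
The first term is `W₂²(ν, T*_#ν)`: gluing any coupling `σ` of `ν` with `T*_#ν` to `γ*` gives a
coupling of `ν` and `μ` whose cost splits in the same way, with `σ` in place of the identity
coupling, so optimality of `γ*` shows that the identity coupling is optimal for `W₂²(ν, T*_#ν)`.
-/

open scoped BigOperators

/-- `γ` is a coupling of the weight vectors `a` and `b`: nonnegative entries,
row sums `a`, column sums `b`. -/
def IsCoupling {n m : ℕ} (a : Fin n → ℝ) (b : Fin m → ℝ) (γ : Fin n → Fin m → ℝ) : Prop :=
  (∀ i j, 0 ≤ γ i j) ∧ (∀ i, ∑ j, γ i j = a i) ∧ (∀ j, ∑ i, γ i j = b j)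

/-- Squared 2-Wasserstein distance between the finitely supported measures
`∑ i, a i • δ (x i)` and `∑ j, b j • δ (y j)`: the minimum quadratic transport
cost over couplings. -/
noncomputable def W2sq {n m d : ℕ} (a : Fin n → ℝ) (b : Fin m → ℝ)
    (x : Fin n → EuclideanSpace ℝ (Fin d)) (y : Fin m → EuclideanSpace ℝ (Fin d)) : ℝ :=
  sInf { c | ∃ γ : Fin n → Fin m → ℝ, IsCoupling a b γ ∧
    c = ∑ i, ∑ j, γ i j * ‖x i - y j‖ ^ 2 }

open Finset

theorem sum_mul_norm_sub_sq_eq_of_barycenter {ι E : Type*} [Fintype ι] [NormedAddCommGroup E]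
    [InnerProductSpace ℝ E] (w : ι → ℝ) (y : ι → E) {t : E}
    (ht : ∑ j, w j • y j = (∑ j, w j) • t) (v : E) :
    ∑ j, w j * ‖v - y j‖ ^ 2 = (∑ j, w j) * ‖v - t‖ ^ 2 + ∑ j, w j * ‖t - y j‖ ^ 2 := by
  have hcentered : ∑ j, w j • (t - y j) = 0 := by
    simp only [smul_sub, sum_sub_distrib, ← sum_smul, ht, sub_self]
  have hexpand : ∀ j, w j * ‖v - y j‖ ^ 2 = w j * ‖v - t‖ ^ 2
      + 2 * inner ℝ (v - t) (w j • (t - y j)) + w j * ‖t - y j‖ ^ 2 := by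
    intro j
    rw [← sub_add_sub_cancel v t (y j), norm_add_sq_real, real_inner_smul_right]
    ring
  rw [sum_congr rfl fun j _ => hexpand j, sum_add_distrib, sum_add_distrib, ← sum_mul,
    ← mul_sum, ← inner_sum, hcentered, inner_zero_right, mul_zero, add_zero]

section Coupling

variable {l n m : ℕ} {E : Type*}

def transportCost [SeminormedAddCommGroup E] (x : Fin n → E) (y : Fin m → E)
    (γ : Fin n → Fin m → ℝ) : ℝ :=
  ∑ i, ∑ j, γ i j * ‖x i - y j‖ ^ 2

theorem W2sq_eq_transportCost_of_forall_le {d : ℕ} {a : Fin n → ℝ} {b : Fin m → ℝ}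
    {x : Fin n → EuclideanSpace ℝ (Fin d)} {y : Fin m → EuclideanSpace ℝ (Fin d)}
    {γ : Fin n → Fin m → ℝ} (hγ : IsCoupling a b γ)
    (hmin : ∀ γ', IsCoupling a b γ' → transportCost x y γ ≤ transportCost x y γ') :
    W2sq a b x y = transportCost x y γ :=
  IsLeast.csInf_eq ⟨⟨γ, hγ, rfl⟩, by rintro c ⟨γ', hγ', rfl⟩; exact hmin γ' hγ'⟩

def diagCoupling (a : Fin n → ℝ) : Fin n → Fin n → ℝ := fun i k => if i = k then a i else 0

theorem isCoupling_diagCoupling {a : Fin n → ℝ} (ha : ∀ i, 0 ≤ a i) :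
    IsCoupling a a (diagCoupling a) := by
  refine ⟨fun i k => ?_, fun i => by simp [diagCoupling], fun k => by simp [diagCoupling]⟩
  unfold diagCoupling
  split_ifs
  exacts [ha i, le_rfl]

/-- The plan `σ` followed by the transition kernel `k ↦ γ k · / a k` of `γ`. -/
noncomputable def glueCoupling (a : Fin n → ℝ) (σ : Fin l → Fin n → ℝ) (γ : Fin n → Fin m → ℝ) :
    Fin l → Fin m → ℝ :=
  fun i j => ∑ k, σ i k * γ k j / a k

theorem IsCoupling.glue {c : Fin l → ℝ} {a : Fin n → ℝ} {b : Fin m → ℝ}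
    {σ : Fin l → Fin n → ℝ} {γ : Fin n → Fin m → ℝ} (hσ : IsCoupling c a σ)
    (hγ : IsCoupling a b γ) (ha : ∀ k, 0 < a k) : IsCoupling c b (glueCoupling a σ γ) := by
  obtain ⟨hσ0, hσrow, hσcol⟩ := hσ
  obtain ⟨hγ0, hγrow, hγcol⟩ := hγ
  refine ⟨fun i j => sum_nonneg fun k _ =>
    div_nonneg (mul_nonneg (hσ0 i k) (hγ0 k j)) (ha k).le, fun i => ?_, fun j => ?_⟩
  · simp only [glueCoupling]
    rw [sum_comm, ← hσrow i]
    refine sum_congr rfl fun k _ => ?_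
    rw [← sum_div, ← mul_sum, hγrow, mul_div_cancel_right₀ _ (ha k).ne']
  · simp only [glueCoupling]
    rw [sum_comm, ← hγcol j]
    refine sum_congr rfl fun k _ => ?_
    rw [← sum_div, ← sum_mul, hσcol, mul_div_cancel_left₀ _ (ha k).ne']

theorem glueCoupling_diagCoupling {a : Fin n → ℝ} (ha : ∀ k, a k ≠ 0)
    (γ : Fin n → Fin m → ℝ) : glueCoupling a (diagCoupling a) γ = γ := by
  ext i j
  simp [glueCoupling, diagCoupling, ite_mul, ite_div, mul_div_cancel_left₀ _ (ha i)]

variable [NormedAddCommGroup E] [InnerProductSpace ℝ E]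

noncomputable def barycentricProjection (a : Fin n → ℝ) (γ : Fin n → Fin m → ℝ) (y : Fin m → E) :
    Fin n → E :=
  fun k => ∑ j, (γ k j / a k) • y j

theorem sum_smul_eq_sum_smul_barycentricProjection {a : Fin n → ℝ} {γ : Fin n → Fin m → ℝ}
    (hrow : ∀ k, ∑ j, γ k j = a k) (ha : ∀ k, a k ≠ 0) (y : Fin m → E) (k : Fin n) :
    ∑ j, γ k j • y j = (∑ j, γ k j) • barycentricProjection a γ y k := by
  rw [barycentricProjection, smul_sum, hrow]
  exact sum_congr rfl fun j _ => by rw [smul_smul, mul_div_cancel₀ _ (ha k)]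

theorem transportCost_glueCoupling {a : Fin n → ℝ} {σ : Fin l → Fin n → ℝ}
    {γ : Fin n → Fin m → ℝ} (hσcol : ∀ k, ∑ i, σ i k = a k) (hγrow : ∀ k, ∑ j, γ k j = a k)
    (ha : ∀ k, a k ≠ 0) (x : Fin l → E) (y : Fin m → E) :
    transportCost x y (glueCoupling a σ γ) =
      transportCost x (barycentricProjection a γ y) σ +
        transportCost (barycentricProjection a γ y) y γ := by
  set T := barycentricProjection a γ y
  have hpyth : ∀ i k, ∑ j, γ k j * ‖x i - y j‖ ^ 2
      = a k * ‖x i - T k‖ ^ 2 + ∑ j, γ k j * ‖T k - y j‖ ^ 2 := fun i k => by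
    rw [sum_mul_norm_sub_sq_eq_of_barycenter _ _
      (sum_smul_eq_sum_smul_barycentricProjection hγrow ha y k), hγrow]
  calc transportCost x y (glueCoupling a σ γ)
      = ∑ i, ∑ k, σ i k / a k * ∑ j, γ k j * ‖x i - y j‖ ^ 2 := by
        refine sum_congr rfl fun i _ => ?_
        simp only [glueCoupling, sum_mul, mul_sum]
        rw [sum_comm]
        exact sum_congr rfl fun k _ => sum_congr rfl fun j _ => by ring
    _ = ∑ i, ∑ k, (σ i k * ‖x i - T k‖ ^ 2
          + σ i k / a k * ∑ j, γ k j * ‖T k - y j‖ ^ 2) := by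
        refine sum_congr rfl fun i _ => sum_congr rfl fun k _ => ?_
        rw [hpyth, mul_add, ← mul_assoc, div_mul_cancel₀ _ (ha k)]
    _ = transportCost x T σ + ∑ k, (∑ i, σ i k) / a k * ∑ j, γ k j * ‖T k - y j‖ ^ 2 := by
        simp only [sum_add_distrib, sum_div, sum_mul]
        rw [sum_comm (f := fun i k => σ i k / a k * _)]
        rfl
    _ = transportCost x T σ + transportCost T y γ := by
        simp only [hσcol, div_self (ha _), one_mul]
        rfl

end Coupling

theorem wasserstein_variance_decomposition_general {n m d : ℕ}
    (a : Fin n → ℝ) (b : Fin m → ℝ)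
    (x : Fin n → EuclideanSpace ℝ (Fin d)) (y : Fin m → EuclideanSpace ℝ (Fin d))
    (ha : ∀ i, 0 < a i)
    (γstar : Fin n → Fin m → ℝ) (hγstar : IsCoupling a b γstar)
    (hopt : ∀ γ : Fin n → Fin m → ℝ, IsCoupling a b γ →
      ∑ i, ∑ j, γstar i j * ‖x i - y j‖ ^ 2 ≤ ∑ i, ∑ j, γ i j * ‖x i - y j‖ ^ 2)
    (Tstar : Fin n → EuclideanSpace ℝ (Fin d))
    (hTstar : ∀ i, Tstar i = ∑ j, (γstar i j / a i) • y j) :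
    W2sq a b x y = W2sq a a x Tstar + ∑ i, ∑ j, γstar i j * ‖Tstar i - y j‖ ^ 2 := by
  have hT : Tstar = barycentricProjection a γstar y := funext hTstar
  subst hT
  have ha0 : ∀ k, a k ≠ 0 := fun k => (ha k).ne'
  have hdiag := isCoupling_diagCoupling fun i => (ha i).le
  have hcost : ∀ σ, IsCoupling a a σ → transportCost x y (glueCoupling a σ γstar) =
      transportCost x (barycentricProjection a γstar y) σ +
        transportCost (barycentricProjection a γstar y) y γstar :=
    fun σ hσ => transportCost_glueCoupling hσ.2.2 hγstar.2.1 ha0 x y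
  have hsplit := hcost _ hdiag
  rw [glueCoupling_diagCoupling ha0] at hsplit
  have hidentity : W2sq a a x (barycentricProjection a γstar y) =
      transportCost x (barycentricProjection a γstar y) (diagCoupling a) := by
    refine W2sq_eq_transportCost_of_forall_le hdiag fun σ hσ => ?_
    have hle : transportCost x y γstar ≤ transportCost x y (glueCoupling a σ γstar) :=
      hopt _ (hσ.glue hγstar ha)
    rw [hsplit, hcost σ hσ] at hle
    linarith
  rw [W2sq_eq_transportCost_of_forall_le hγstar hopt, hsplit, hidentity]
  rfl

theorem wasserstein_variance_decomposition {n m d : ℕ}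
    (a : Fin n → ℝ) (b : Fin m → ℝ)
    (x : Fin n → EuclideanSpace ℝ (Fin d)) (y : Fin m → EuclideanSpace ℝ (Fin d))
    (ha : ∀ i, 0 < a i) (hasum : ∑ i, a i = 1)
    (hb : ∀ j, 0 ≤ b j) (hbsum : ∑ j, b j = 1)
    (γstar : Fin n → Fin m → ℝ) (hγstar : IsCoupling a b γstar)
    (hopt : ∀ γ : Fin n → Fin m → ℝ, IsCoupling a b γ →
      ∑ i, ∑ j, γstar i j * ‖x i - y j‖ ^ 2 ≤ ∑ i, ∑ j, γ i j * ‖x i - y j‖ ^ 2)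
    (Tstar : Fin n → EuclideanSpace ℝ (Fin d))
    (hTstar : ∀ i, Tstar i = ∑ j, (γstar i j / a i) • y j) :
    W2sq a b x y = W2sq a a x Tstar + ∑ i, ∑ j, γstar i j * ‖Tstar i - y j‖ ^ 2 :=
  wasserstein_variance_decomposition_general a b x y ha γstar hγstar hopt Tstar hTstar
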